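/- For every n ≥ 1, 1 ≤ i ≤ m ≤ n, all z, w ∈ ℂ and every B ∈ Matₙ(ℂ): φ_{m,i}(z+w)(B) = φ_{m,i}(z)(φ_{m,i}(w)(B)), and φ_{m,i}(0)(B) = B. That is, each Gelfand–Zeitlin flow φ_{m,i} is an action of the additive group ℂ on Matₙ(ℂ). -/

import Mathlib

open Matrix

noncomputable section

/-- Upper-left `m × m` submatrix of an `n × n` matrix. -/
def ulMinor {n : ℕ} (m : ℕ) (hm : m ≤ n) (B : Matrix (Fin n) (Fin n) ℂ) :
    Matrix (Fin m) (Fin m) ℂ :=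
  fun i j => B (Fin.castLE hm i) (Fin.castLE hm j)

/-- The embedding `ι_m` of `m × m` matrices into `n × n` matrices, placing the matrix in
the upper-left block and zeros elsewhere. -/
def iotaEmb {m : ℕ} (n : ℕ) (X : Matrix (Fin m) (Fin m) ℂ) : Matrix (Fin n) (Fin n) ℂ :=
  fun i j => if hi : (i : ℕ) < m then
    (if hj : (j : ℕ) < m then X ⟨i, hi⟩ ⟨j, hj⟩ else 0) else 0

/-- The Gelfand–Zeitlin flow `φ_{m,i}(z)(B) = exp(z ι_m((B_(m))^(i-1))) B exp(-z ι_m((B_(m))^(i-1)))`. -/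
def gzFlow {n : ℕ} (m i : ℕ) (hm : m ≤ n) (z : ℂ) (B : Matrix (Fin n) (Fin n) ℂ) :
    Matrix (Fin n) (Fin n) ℂ :=
  NormedSpace.exp (z • iotaEmb n ((ulMinor m hm B) ^ (i - 1))) * B *
    NormedSpace.exp ((-z) • iotaEmb n ((ulMinor m hm B) ^ (i - 1)))

/-! Write `A = B_(m)` and `X = ι_m(C)` with `C = A^(i-1)`. Since `P = ι_m(1)` is the projection
onto the first `m` coordinates, `ι_m(M_(m)) = P M P`, and `P` commutes with `X`; so conjugating `B`
by `exp(zX)` conjugates `ι_m(A)` by `exp(zX)`, which fixes it because `C` commutes with `A`. Thus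
the flow preserves `B_(m)`, hence its own generator `X`, and the group law reduces to
`exp((z+w)X) = exp(zX) exp(wX)`. -/

section MatrixExp

variable {ι 𝕂 : Type*} [Fintype ι] [DecidableEq ι] [RCLike 𝕂]

theorem Matrix.exp_add_smul (X : Matrix ι ι 𝕂) (z w : 𝕂) :
    NormedSpace.exp ((z + w) • X) = NormedSpace.exp (z • X) * NormedSpace.exp (w • X) := by
  rw [add_smul, Matrix.exp_add_of_commute _ _ (((Commute.refl X).smul_left z).smul_right w)]

theorem Matrix.exp_smul_mul_exp_neg_smul (X : Matrix ι ι 𝕂) (z : 𝕂) :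
    NormedSpace.exp (z • X) * NormedSpace.exp ((-z) • X) = 1 := by
  rw [← Matrix.exp_add_smul, add_neg_cancel, zero_smul, NormedSpace.exp_zero]

theorem Matrix.exp_smul_conj_of_commute {X Y : Matrix ι ι 𝕂} (h : Commute Y X) (z : 𝕂) :
    NormedSpace.exp (z • X) * Y * NormedSpace.exp ((-z) • X) = Y := by
  rw [← ((h.smul_right z).exp_right).eq, mul_assoc, Matrix.exp_smul_mul_exp_neg_smul, mul_one]

end MatrixExp

section Embedding

variable {m n : ℕ}

theorem iotaEmb_castLE (hm : m ≤ n) (X : Matrix (Fin m) (Fin m) ℂ) (i j : Fin m) :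
    iotaEmb n X (Fin.castLE hm i) (Fin.castLE hm j) = X i j := by
  simp [iotaEmb]

theorem ulMinor_iotaEmb (hm : m ≤ n) (X : Matrix (Fin m) (Fin m) ℂ) :
    ulMinor m hm (iotaEmb n X) = X := by
  ext i j
  exact iotaEmb_castLE hm X i j

theorem iotaEmb_apply_of_not_lt_left (X : Matrix (Fin m) (Fin m) ℂ) {i : Fin n}
    (hi : ¬ (i : ℕ) < m) (j : Fin n) : iotaEmb n X i j = 0 := by
  simp [iotaEmb, hi]

theorem iotaEmb_apply_of_not_lt_right (X : Matrix (Fin m) (Fin m) ℂ) (i : Fin n) {j : Fin n}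
    (hj : ¬ (j : ℕ) < m) : iotaEmb n X i j = 0 := by
  simp [iotaEmb, hj]

theorem iotaEmb_mul (hm : m ≤ n) (X Y : Matrix (Fin m) (Fin m) ℂ) :
    iotaEmb n X * iotaEmb n Y = iotaEmb n (X * Y) := by
  ext i j
  by_cases hij : (i : ℕ) < m ∧ (j : ℕ) < m
  · obtain ⟨hi, hj⟩ := hij
    obtain ⟨i, rfl⟩ : ∃ i' : Fin m, Fin.castLE hm i' = i := ⟨⟨i, hi⟩, rfl⟩
    obtain ⟨j, rfl⟩ : ∃ j' : Fin m, Fin.castLE hm j' = j := ⟨⟨j, hj⟩, rfl⟩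
    rw [iotaEmb_castLE, mul_apply, mul_apply]
    refine (Fintype.sum_of_injective _ (Fin.castLE_injective hm) _ _ (fun k hk => ?_)
      (fun k => by rw [iotaEmb_castLE, iotaEmb_castLE])).symm
    have hk : ¬ (k : ℕ) < m := fun hk' => hk ⟨⟨k, hk'⟩, rfl⟩
    rw [iotaEmb_apply_of_not_lt_right _ _ hk, zero_mul]
  · rcases not_and_or.mp hij with hi | hj
    · simp [mul_apply, iotaEmb_apply_of_not_lt_left _ hi]
    · simp [mul_apply, iotaEmb_apply_of_not_lt_right _ _ hj]

theorem iotaEmb_one_mul_mul_iotaEmb_one (hm : m ≤ n) (M : Matrix (Fin n) (Fin n) ℂ) :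
    iotaEmb n (1 : Matrix (Fin m) (Fin m) ℂ) * M * iotaEmb n (1 : Matrix (Fin m) (Fin m) ℂ)
      = iotaEmb n (ulMinor m hm M) := by
  have hdiag : iotaEmb n (1 : Matrix (Fin m) (Fin m) ℂ)
      = diagonal fun k : Fin n => if (k : ℕ) < m then 1 else 0 := by
    ext k l
    simp only [iotaEmb, one_apply, diagonal_apply, Fin.ext_iff]
    split_ifs <;> simp_all
  rw [hdiag]
  ext k l
  simp only [diagonal_mul, mul_diagonal, iotaEmb, ulMinor]
  split_ifs <;> simp

theorem ulMinor_exp_smul_iotaEmb_conj (hm : m ≤ n) {C : Matrix (Fin m) (Fin m) ℂ}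
    {B : Matrix (Fin n) (Fin n) ℂ} (hC : Commute (ulMinor m hm B) C) (z : ℂ) :
    ulMinor m hm (NormedSpace.exp (z • iotaEmb n C) * B * NormedSpace.exp ((-z) • iotaEmb n C))
      = ulMinor m hm B := by
  set P := iotaEmb n (1 : Matrix (Fin m) (Fin m) ℂ)
  set E := NormedSpace.exp (z • iotaEmb n C)
  set E' := NormedSpace.exp ((-z) • iotaEmb n C)
  have hPC : Commute P (iotaEmb n C) := by
    simp only [Commute, SemiconjBy, P, iotaEmb_mul hm, one_mul, mul_one]
  have hBC : Commute (iotaEmb n (ulMinor m hm B)) (iotaEmb n C) := by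
    simp only [Commute, SemiconjBy, iotaEmb_mul hm, hC.eq]
  have hPE : P * E = E * P := ((hPC.smul_right z).exp_right).eq
  have hE'P : E' * P = P * E' := ((hPC.smul_right (-z)).exp_right).eq.symm
  calc ulMinor m hm (E * B * E')
      = ulMinor m hm (iotaEmb n (ulMinor m hm (E * B * E'))) := (ulMinor_iotaEmb hm _).symm
    _ = ulMinor m hm (E * iotaEmb n (ulMinor m hm B) * E') := by
      rw [← iotaEmb_one_mul_mul_iotaEmb_one, ← iotaEmb_one_mul_mul_iotaEmb_one]
      congr 1
      calc P * (E * B * E') * P = (P * E) * B * (E' * P) := by simp only [mul_assoc]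
        _ = E * (P * B * P) * E' := by rw [hPE, hE'P]; simp only [mul_assoc]
    _ = ulMinor m hm B := by
      rw [Matrix.exp_smul_conj_of_commute hBC, ulMinor_iotaEmb]

end Embedding

theorem ulMinor_gzFlow {n : ℕ} (m i : ℕ) (hm : m ≤ n) (z : ℂ) (B : Matrix (Fin n) (Fin n) ℂ) :
    ulMinor m hm (gzFlow m i hm z B) = ulMinor m hm B :=
  ulMinor_exp_smul_iotaEmb_conj hm ((Commute.refl _).pow_right _) z

theorem gzFlow_add {n : ℕ} (m i : ℕ) (hm : m ≤ n) (z w : ℂ) (B : Matrix (Fin n) (Fin n) ℂ) :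
    gzFlow m i hm (z + w) B = gzFlow m i hm z (gzFlow m i hm w B) := by
  conv_rhs => rw [gzFlow, ulMinor_gzFlow]
  set X := iotaEmb n (ulMinor m hm B ^ (i - 1))
  calc gzFlow m i hm (z + w) B
      = NormedSpace.exp ((z + w) • X) * B * NormedSpace.exp ((-w + -z) • X) := by
        rw [gzFlow, neg_add_rev]
    _ = NormedSpace.exp (z • X) * (NormedSpace.exp (w • X) * B * NormedSpace.exp ((-w) • X))
          * NormedSpace.exp ((-z) • X) := by
        rw [Matrix.exp_add_smul, Matrix.exp_add_smul]; simp only [mul_assoc]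

theorem gzFlow_zero {n : ℕ} (m i : ℕ) (hm : m ≤ n) (B : Matrix (Fin n) (Fin n) ℂ) :
    gzFlow m i hm 0 B = B := by
  simp [gzFlow]

theorem gz_flow_one_parameter_group_general (n : ℕ)
    (m i : ℕ) (hm : m ≤ n)
    (z w : ℂ) (B : Matrix (Fin n) (Fin n) ℂ) :
    gzFlow m i hm (z + w) B = gzFlow m i hm z (gzFlow m i hm w B) ∧
      gzFlow m i hm 0 B = B :=
  ⟨gzFlow_add m i hm z w B, gzFlow_zero m i hm B⟩

/-- Each Gelfand–Zeitlin flow `φ_{m,i}` is an action of the additive group `ℂ` on `Matₙ(ℂ)`. -/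
theorem gz_flow_one_parameter_group (n : ℕ) (hn : 1 ≤ n)
    (m i : ℕ) (hi1 : 1 ≤ i) (him : i ≤ m) (hm : m ≤ n)
    (z w : ℂ) (B : Matrix (Fin n) (Fin n) ℂ) :
    gzFlow m i hm (z + w) B = gzFlow m i hm z (gzFlow m i hm w B) ∧
      gzFlow m i hm 0 B = B :=
  gz_flow_one_parameter_group_general n m i hm z w B
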